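/- For every host graph H there exists a Greedy Equilibrium in the global edge-buying setting. -/

import Mathlib

namespace TNCG

/-- A time edge: an undirected edge together with a time label. -/
abbrev TimeEdge (V : Type) := Sym2 V × ℕ

/-- A temporal host graph with terminals: the underlying graph is complete, every
(non-loop) edge carries a nonempty finite set of time labels, and there is a
nonempty set of terminal nodes. -/
structure HostGraph (V : Type) [Fintype V] [DecidableEq V] where
  labels : Sym2 V → Finset ℕ
  labels_nonempty : ∀ e : Sym2 V, ¬ e.IsDiag → (labels e).Nonempty
  labels_diag : ∀ e : Sym2 V, e.IsDiag → labels e = ∅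
  terminals : Finset V
  terminals_nonempty : terminals.Nonempty

variable {V : Type} [Fintype V] [DecidableEq V]

/-- Temporal reachability within a set `A` of time edges: `ReachFrom A t u w` holds if
there is a temporal walk from `u` to `w` all of whose labels are `≥ t` and non-decreasing. -/
inductive ReachFrom (A : Finset (TimeEdge V)) : ℕ → V → V → Prop
  | refl (t : ℕ) (v : V) : ReachFrom A t v v
  | step {t : ℕ} {u v w : V} (l : ℕ) (hle : t ≤ l) (he : (s(u, v), l) ∈ A)
      (htail : ReachFrom A l v w) : ReachFrom A t u w

/-- `u` reaches `w` via a temporal path in the time-edge set `A`. -/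
def Reaches (A : Finset (TimeEdge V)) (u w : V) : Prop := ReachFrom A 0 u w

/-- A strategy profile: each agent buys a finite set of time edges. -/
abbrev Profile (V : Type) := V → Finset (TimeEdge V)

/-- The set of time edges of the created graph `G(s)`. -/
def built (s : Profile V) : Finset (TimeEdge V) := Finset.univ.biUnion s

/-- The two edge-buying settings. -/
inductive Setting | loc | glob
deriving DecidableEq

/-- The two equilibrium types. -/
inductive EqType | nash | greedy
deriving DecidableEq

/-- A time edge of the host graph. -/
def HostGraph.ValidTimeEdge (H : HostGraph V) (p : TimeEdge V) : Prop :=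
  p.2 ∈ H.labels p.1

/-- Which strategies are allowed for agent `v` in a given setting: in the local setting all
bought time edges must be incident to `v`; in the global setting there is no restriction. -/
def Allowed (H : HostGraph V) : Setting → V → Finset (TimeEdge V) → Prop
  | Setting.loc, v, S => ∀ p ∈ S, H.ValidTimeEdge p ∧ v ∈ p.1
  | Setting.glob, _, S => ∀ p ∈ S, H.ValidTimeEdge p

open Classical in
/-- The cost of agent `v`: the number of bought time edges plus `C` times the number of
unreached terminals. -/
noncomputable def cost (H : HostGraph V) (C : ℝ) (s : Profile V) (v : V) : ℝ :=
  ((s v).card : ℝ) + C * ((H.terminals.filter fun t => ¬ Reaches (built s) v t).card : ℝ)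

/-- The profile obtained from `s` by replacing `v`'s strategy with `S'`. -/
def update (s : Profile V) (v : V) (S' : Finset (TimeEdge V)) : Profile V :=
  fun u => if u = v then S' else s u

/-- `S'` is obtained from `S` by adding or removing a single time edge. -/
def GreedyDev (S S' : Finset (TimeEdge V)) : Prop :=
  (∃ p, p ∉ S ∧ S' = insert p S) ∨ (∃ p ∈ S, S' = S.erase p)

/-- `s` is an equilibrium (Nash or Greedy) in the given setting: every strategy is allowed, and
no agent has an (allowed, and for Greedy Equilibria single-time-edge) improving response. -/
def IsEquilibrium (H : HostGraph V) (C : ℝ) (st : Setting) (et : EqType) (s : Profile V) :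
    Prop :=
  (∀ v, Allowed H st v (s v)) ∧
    ∀ v S', Allowed H st v S' → (et = EqType.greedy → GreedyDev (s v) S') →
      ¬ cost H C (update s v S') v < cost H C s v

/-- The social cost of a strategy profile. -/
noncomputable def socialCost (H : HostGraph V) (C : ℝ) (s : Profile V) : ℝ :=
  ∑ v, cost H C s v

/-- A social optimum: an allowed strategy profile of minimum social cost. -/
def IsSocialOptimum (H : HostGraph V) (C : ℝ) (st : Setting) (s : Profile V) : Prop :=
  (∀ v, Allowed H st v (s v)) ∧
    ∀ s' : Profile V, (∀ v, Allowed H st v (s' v)) → socialCost H C s ≤ socialCost H C s'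

/-- The lifetime of a host graph: its largest time label. -/
def HostGraph.maxLabel (H : HostGraph V) : ℕ :=
  Finset.univ.sup fun p : V × V => (H.labels s(p.1, p.2)).sup id

/-- The simple graph whose edges are the host edges carrying the maximum label. -/
def maxLabelGraph (H : HostGraph V) : SimpleGraph V where
  Adj u v := u ≠ v ∧ H.maxLabel ∈ H.labels s(u, v)
  symm := by
    constructor
    intro u v h
    exact ⟨Ne.symm h.1, by rw [Sym2.eq_swap]; exact h.2⟩
  loopless := ⟨fun v h => h.1 rfl⟩

/-- The simple graph underlying a set of time edges. -/
def edgesGraph (A : Finset (TimeEdge V)) : SimpleGraph V where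
  Adj u v := u ≠ v ∧ ∃ l, (s(u, v), l) ∈ A
  symm := by
    constructor
    rintro u v ⟨h, l, hl⟩
    exact ⟨Ne.symm h, l, by rw [Sym2.eq_swap]; exact hl⟩
  loopless := ⟨fun v h => h.1 rfl⟩

/-- A terminal spanner: a valid time-edge set in which every node reaches every terminal. -/
def IsTerminalSpanner (H : HostGraph V) (A : Finset (TimeEdge V)) : Prop :=
  (∀ p ∈ A, H.ValidTimeEdge p) ∧ ∀ v : V, ∀ t ∈ H.terminals, Reaches A v t

/-- An inclusion minimal terminal spanner. -/
def IsMinimalTerminalSpanner (H : HostGraph V) (A : Finset (TimeEdge V)) : Prop :=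
  IsTerminalSpanner H A ∧ ∀ p ∈ A, ¬ IsTerminalSpanner H (A.erase p)

/-- A host graph is simple if every (non-loop) edge carries exactly one time label. -/
def HostGraph.Simple (H : HostGraph V) : Prop :=
  ∀ e : Sym2 V, ¬ e.IsDiag → (H.labels e).card = 1


theorem reachFrom_mono {A B : Finset (TimeEdge V)} (hAB : A ⊆ B) {t : ℕ} {u w : V}
    (h : ReachFrom A t u w) : ReachFrom B t u w := by
  induction h with
  | refl t v => exact .refl t v
  | step l hle he htail ih => exact .step l hle (hAB he) ih

theorem reaches_mono {A B : Finset (TimeEdge V)} (hAB : A ⊆ B) {u w : V}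
    (h : Reaches A u w) : Reaches B u w := reachFrom_mono hAB h

/-- All valid time edges of a host graph. -/
def allEdges (H : HostGraph V) : Finset (TimeEdge V) :=
  Finset.univ.biUnion fun e : Sym2 V => (H.labels e).image fun l => (e, l)

theorem allEdges_spanner (H : HostGraph V) : IsTerminalSpanner H (allEdges H) := by
  constructor
  · intro p hp
    simp only [allEdges, Finset.mem_biUnion, Finset.mem_univ, Finset.mem_image,
      true_and] at hp
    obtain ⟨e, l, hl, rfl⟩ := hp
    exact hl
  · intro v t ht
    by_cases hvt : v = t
    · subst hvt; exact .refl 0 v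
    · have hd : ¬ (s(v, t) : Sym2 V).IsDiag := by
        simpa [Sym2.isDiag_iff_proj_eq] using hvt
      obtain ⟨l, hl⟩ := H.labels_nonempty _ hd
      refine .step l (Nat.zero_le l) ?_ (.refl l t)
      simp only [allEdges, Finset.mem_biUnion, Finset.mem_univ, Finset.mem_image, true_and]
      exact ⟨s(v, t), l, hl, rfl⟩

theorem exists_min_spanner (H : HostGraph V) :
    ∃ A : Finset (TimeEdge V), IsMinimalTerminalSpanner H A := by
  have key : ∀ A : Finset (TimeEdge V), IsTerminalSpanner H A →
      ∃ B, IsMinimalTerminalSpanner H B := by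
    intro A
    induction A using Finset.strongInduction with
    | _ A ih =>
      intro hA
      by_cases h : ∀ p ∈ A, ¬ IsTerminalSpanner H (A.erase p)
      · exact ⟨A, hA, h⟩
      · push_neg at h
        obtain ⟨p, hp, hsp⟩ := h
        exact ih _ (Finset.erase_ssubset hp) hsp
  exact key _ (allEdges_spanner H)

/-- For every host graph `H` there exists a Greedy Equilibrium in the global
edge-buying setting. -/
theorem GE_exists {V : Type} [Fintype V] [DecidableEq V] (H : HostGraph V)
    (C : ℝ) (hC : 1 < C) :
    ∃ s : Profile V, IsEquilibrium H C Setting.glob EqType.greedy s := by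
  classical
  obtain ⟨A, hA, hmin⟩ := exists_min_spanner H
  have hVne : Nonempty V := ⟨H.terminals_nonempty.choose⟩
  -- a witness function: for each p ∈ A, a node that loses a terminal when p is removed
  have hw : ∀ p ∈ A, ∃ v : V, ∃ t ∈ H.terminals, ¬ Reaches (A.erase p) v t := by
    intro p hp
    have hns := hmin p hp
    rw [IsTerminalSpanner] at hns
    push_neg at hns
    exact hns fun q hq => hA.1 q (Finset.mem_of_mem_erase hq)
  set f : TimeEdge V → V := fun p =>
    if h : p ∈ A then (hw p h).choose else Classical.arbitrary V with hf
  have hfspec : ∀ p ∈ A, ∃ t ∈ H.terminals, ¬ Reaches (A.erase p) (f p) t := by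
    intro p hp
    simp only [hf, dif_pos hp]
    exact (hw p hp).choose_spec
  set s : Profile V := fun v => A.filter fun p => f p = v with hs
  have hsub : ∀ v, s v ⊆ A := fun v => Finset.filter_subset _ _
  have hmem : ∀ v p, p ∈ s v ↔ p ∈ A ∧ f p = v := by
    intro v p; simp [hs]
  have hbuilt : built s = A := by
    ext q
    simp only [built, Finset.mem_biUnion, Finset.mem_univ, true_and, hmem]
    exact ⟨fun ⟨v, h, _⟩ => h, fun h => ⟨f q, h, rfl⟩⟩
  have hreach : ∀ (B : Finset (TimeEdge V)), A ⊆ B → ∀ v,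
      (H.terminals.filter fun t => ¬ Reaches B v t) = ∅ := by
    intro B hAB v
    rw [Finset.filter_eq_empty_iff]
    intro t ht h
    exact h (reaches_mono hAB (hA.2 v t ht))
  refine ⟨s, ?_, ?_⟩
  · intro v p hp
    exact hA.1 p (hsub v hp)
  · intro v S' _hall hdev hlt
    obtain (⟨p, hpn, rfl⟩ | ⟨p, hp, rfl⟩) := hdev rfl
    · -- adding a time edge cannot help: v already reaches all terminals
      have hb : A ⊆ built (update s v (insert p (s v))) := by
        intro q hq
        simp only [built, Finset.mem_biUnion, Finset.mem_univ, true_and, update]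
        refine ⟨f q, ?_⟩
        by_cases hfq : f q = v
        · simp [hfq, Finset.mem_insert, (hmem v q).2 ⟨hq, hfq⟩]
        · simp [hfq, (hmem (f q) q).2 ⟨hq, rfl⟩]
      have h1 : cost H C (update s v (insert p (s v))) v
          = ((insert p (s v)).card : ℝ) := by
        simp [cost, update, hreach _ hb v]
      have h2 : cost H C s v = ((s v).card : ℝ) := by
        simp [cost, hbuilt, hreach A subset_rfl v]
      rw [h1, h2, Finset.card_insert_of_notMem hpn] at hlt
      push_cast at hlt
      linarith
    · -- removing a time edge loses a terminal for v
      have hpA : p ∈ A := hsub v hp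
      have hfp : f p = v := ((hmem v p).1 hp).2
      have hbe : built (update s v ((s v).erase p)) = A.erase p := by
        ext q
        simp only [built, Finset.mem_biUnion, Finset.mem_univ, true_and, update,
          Finset.mem_erase]
        constructor
        · rintro ⟨u, hu⟩
          by_cases huv : u = v
          · subst huv
            rw [if_pos rfl, Finset.mem_erase] at hu
            exact ⟨hu.1, hsub u hu.2⟩
          · rw [if_neg huv] at hu
            refine ⟨?_, hsub u hu⟩
            intro hqp
            subst hqp
            exact huv (((hmem u q).1 hu).2.symm.trans hfp)
        · rintro ⟨hqp, hqA⟩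
          by_cases hfq : f q = v
          · refine ⟨v, ?_⟩
            rw [if_pos rfl, Finset.mem_erase]
            exact ⟨hqp, (hmem v q).2 ⟨hqA, hfq⟩⟩
          · refine ⟨f q, ?_⟩
            rw [if_neg hfq]
            exact (hmem (f q) q).2 ⟨hqA, rfl⟩
      obtain ⟨t, htT, htn⟩ := hfspec p hpA
      have hcard1 : 1 ≤ (H.terminals.filter fun t => ¬ Reaches (A.erase p) v t).card :=
        Finset.card_pos.mpr ⟨t, Finset.mem_filter.mpr ⟨htT, by rwa [hfp] at htn⟩⟩
      have h1 : cost H C (update s v ((s v).erase p)) v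
          = (((s v).erase p).card : ℝ)
            + C * ((H.terminals.filter fun t => ¬ Reaches (A.erase p) v t).card : ℝ) := by
        simp [cost, update, hbe]
      have h2 : cost H C s v = ((s v).card : ℝ) := by
        simp [cost, hbuilt, hreach A subset_rfl v]
      rw [h1, h2, Finset.card_erase_of_mem hp] at hlt
      have hc1 : 1 ≤ (s v).card := Finset.card_pos.mpr ⟨p, hp⟩
      have hk : (1 : ℝ) ≤ ((H.terminals.filter fun t => ¬ Reaches (A.erase p) v t).card : ℝ) :=
        by exact_mod_cast hcard1
      rw [Nat.cast_sub hc1] at hlt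
      push_cast at hlt
      have hCk : (1 : ℝ) * 1 ≤ C *
          ((H.terminals.filter fun t => ¬ Reaches (A.erase p) v t).card : ℝ) :=
        mul_le_mul hC.le hk one_pos.le (by linarith)
      linarith

end TNCG
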